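/- In the Euler problem with Hamiltonian H(q,p) = |p|²/2 − (1−μ)/|q−E| − μ/|q−M| with E = (0,0), M = (1,0) and μ ∈ (0,1), the function B(q,p) = −(q₁p₂ − q₂p₁)² + (q₁p₂ − q₂p₁)p₂ − (1−μ)q₁/|q−E| − μ(1−q₁)/|q−M| is a first integral: its Poisson bracket with H vanishes, {H, B} = 0, on T*(ℝ²∖{E,M}). -/

import Mathlib

/-- Poisson bracket of two functions of `(q₁, q₂, p₁, p₂)` with respect to the
standard symplectic structure on `T*ℝ²`:
`{f,g} = Σᵢ (∂f/∂pᵢ · ∂g/∂qᵢ − ∂f/∂qᵢ · ∂g/∂pᵢ)`. -/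
noncomputable def poissonBracket (f g : ℝ → ℝ → ℝ → ℝ → ℝ)
    (q₁ q₂ p₁ p₂ : ℝ) : ℝ :=
  (deriv (fun x => f q₁ q₂ x p₂) p₁) * (deriv (fun x => g x q₂ p₁ p₂) q₁)
  - (deriv (fun x => f x q₂ p₁ p₂) q₁) * (deriv (fun x => g q₁ q₂ x p₂) p₁)
  + (deriv (fun x => f q₁ q₂ p₁ x) p₂) * (deriv (fun x => g q₁ x p₁ p₂) q₂)
  - (deriv (fun x => f q₁ x p₁ p₂) q₂) * (deriv (fun x => g q₁ q₂ p₁ x) p₂)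

/-- The Hamiltonian of the Euler problem of two fixed centers,
with `E = (0,0)` and `M = (1,0)`. -/
noncomputable def eulerHamiltonian (μ : ℝ) (q₁ q₂ p₁ p₂ : ℝ) : ℝ :=
  (p₁ ^ 2 + p₂ ^ 2) / 2 - (1 - μ) / Real.sqrt (q₁ ^ 2 + q₂ ^ 2)
    - μ / Real.sqrt ((q₁ - 1) ^ 2 + q₂ ^ 2)

/-- The classical first integral of the Euler problem. -/
noncomputable def eulerIntegral (μ : ℝ) (q₁ q₂ p₁ p₂ : ℝ) : ℝ :=
  -(q₁ * p₂ - q₂ * p₁) ^ 2 + (q₁ * p₂ - q₂ * p₁) * p₂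
    - (1 - μ) * q₁ / Real.sqrt (q₁ ^ 2 + q₂ ^ 2)
    - μ * (1 - q₁) / Real.sqrt ((q₁ - 1) ^ 2 + q₂ ^ 2)

/-! Write `L = q₁p₂ − q₂p₁`, `r_E = |q − E|`, `r_M = |q − M|`. Once the eight partial derivatives
are known, with `r_E² = q₁² + q₂²` and `r_M² = (q₁ − 1)² + q₂²` used only in differentiating the
Coulomb terms, `{H, B}` vanishes as a polynomial identity in `q`, `p`, `μ`, `r_E⁻³` and `r_M⁻³`:
the kinetic energy commutes with `L` and `p₂`, and the terms in `r_E⁻³` and `r_M⁻³` cancel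
separately. -/

theorem sub_sq_add_sq_pos_of_ne {x y a : ℝ} (h : (x, y) ≠ (a, 0)) : 0 < (x - a) ^ 2 + y ^ 2 := by
  rw [Ne, Prod.mk.injEq, not_and_or] at h
  rcases h with hx | hy
  · have : x - a ≠ 0 := sub_ne_zero.mpr hx
    positivity
  · positivity

theorem HasDerivAt.div_sqrt {f g : ℝ → ℝ} {f' g' x : ℝ} (hg : HasDerivAt g g' x)
    (hf : HasDerivAt f f' x) (hx : 0 < f x) :
    HasDerivAt (fun t => g t / √(f t)) ((2 * g' * f x - g x * f') / (2 * √(f x) ^ 3)) x := by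
  have hr : √(f x) ≠ 0 := (Real.sqrt_pos.mpr hx).ne'
  refine (hg.div (hf.sqrt hx.ne') hr).congr_deriv ?_
  field_simp
  rw [Real.sq_sqrt hx.le]
  ring

theorem poissonBracket_eq_of_hasDerivAt {f g : ℝ → ℝ → ℝ → ℝ → ℝ}
    {q₁ q₂ p₁ p₂ fq₁ fq₂ fp₁ fp₂ gq₁ gq₂ gp₁ gp₂ : ℝ}
    (hfq₁ : HasDerivAt (fun x => f x q₂ p₁ p₂) fq₁ q₁)
    (hfq₂ : HasDerivAt (fun x => f q₁ x p₁ p₂) fq₂ q₂)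
    (hfp₁ : HasDerivAt (fun x => f q₁ q₂ x p₂) fp₁ p₁)
    (hfp₂ : HasDerivAt (fun x => f q₁ q₂ p₁ x) fp₂ p₂)
    (hgq₁ : HasDerivAt (fun x => g x q₂ p₁ p₂) gq₁ q₁)
    (hgq₂ : HasDerivAt (fun x => g q₁ x p₁ p₂) gq₂ q₂)
    (hgp₁ : HasDerivAt (fun x => g q₁ q₂ x p₂) gp₁ p₁)
    (hgp₂ : HasDerivAt (fun x => g q₁ q₂ p₁ x) gp₂ p₂) :
    poissonBracket f g q₁ q₂ p₁ p₂ = fp₁ * gq₁ - fq₁ * gp₁ + fp₂ * gq₂ - fq₂ * gp₂ := by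
  rw [poissonBracket, hfq₁.deriv, hfq₂.deriv, hfp₁.deriv, hfp₂.deriv, hgq₁.deriv, hgq₂.deriv,
    hgp₁.deriv, hgp₂.deriv]

section
variable (μ : ℝ) {q₁ q₂ p₁ p₂ : ℝ}

theorem hasDerivAt_eulerHamiltonian_q₁ (hE : 0 < q₁ ^ 2 + q₂ ^ 2)
    (hM : 0 < (q₁ - 1) ^ 2 + q₂ ^ 2) :
    HasDerivAt (fun x => eulerHamiltonian μ x q₂ p₁ p₂)
      ((1 - μ) * q₁ / √(q₁ ^ 2 + q₂ ^ 2) ^ 3 + μ * (q₁ - 1) / √((q₁ - 1) ^ 2 + q₂ ^ 2) ^ 3) q₁ := by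
  have hVE := (hasDerivAt_const q₁ (1 - μ)).div_sqrt ((hasDerivAt_pow 2 q₁).add_const (q₂ ^ 2)) hE
  have hVM := (hasDerivAt_const q₁ μ).div_sqrt
    (((hasDerivAt_id' q₁).sub_const 1).fun_pow 2 |>.add_const (q₂ ^ 2)) hM
  refine ((hasDerivAt_const q₁ ((p₁ ^ 2 + p₂ ^ 2) / 2)).sub hVE |>.sub hVM).congr_deriv ?_
  field_simp
  ring

theorem hasDerivAt_eulerHamiltonian_q₂ (hE : 0 < q₁ ^ 2 + q₂ ^ 2)
    (hM : 0 < (q₁ - 1) ^ 2 + q₂ ^ 2) :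
    HasDerivAt (fun x => eulerHamiltonian μ q₁ x p₁ p₂)
      ((1 - μ) * q₂ / √(q₁ ^ 2 + q₂ ^ 2) ^ 3 + μ * q₂ / √((q₁ - 1) ^ 2 + q₂ ^ 2) ^ 3) q₂ := by
  have hVE := (hasDerivAt_const q₂ (1 - μ)).div_sqrt ((hasDerivAt_pow 2 q₂).const_add (q₁ ^ 2)) hE
  have hVM := (hasDerivAt_const q₂ μ).div_sqrt ((hasDerivAt_pow 2 q₂).const_add ((q₁ - 1) ^ 2)) hM
  refine ((hasDerivAt_const q₂ ((p₁ ^ 2 + p₂ ^ 2) / 2)).sub hVE |>.sub hVM).congr_deriv ?_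
  field_simp
  ring

theorem hasDerivAt_eulerHamiltonian_p₁ :
    HasDerivAt (fun x => eulerHamiltonian μ q₁ q₂ x p₂) p₁ p₁ := by
  refine (((hasDerivAt_pow 2 p₁).add_const (p₂ ^ 2)).div_const 2 |>.sub_const _ |>.sub_const _)
    |>.congr_deriv ?_
  ring

theorem hasDerivAt_eulerHamiltonian_p₂ :
    HasDerivAt (fun x => eulerHamiltonian μ q₁ q₂ p₁ x) p₂ p₂ := by
  refine (((hasDerivAt_pow 2 p₂).const_add (p₁ ^ 2)).div_const 2 |>.sub_const _ |>.sub_const _)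
    |>.congr_deriv ?_
  ring

theorem hasDerivAt_eulerIntegral_q₁ (hE : 0 < q₁ ^ 2 + q₂ ^ 2)
    (hM : 0 < (q₁ - 1) ^ 2 + q₂ ^ 2) :
    HasDerivAt (fun x => eulerIntegral μ x q₂ p₁ p₂)
      (-2 * (q₁ * p₂ - q₂ * p₁) * p₂ + p₂ ^ 2 - (1 - μ) * q₂ ^ 2 / √(q₁ ^ 2 + q₂ ^ 2) ^ 3
        + μ * q₂ ^ 2 / √((q₁ - 1) ^ 2 + q₂ ^ 2) ^ 3) q₁ := by
  have hL : HasDerivAt (fun x => x * p₂ - q₂ * p₁) p₂ q₁ := by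
    simpa using ((hasDerivAt_id' q₁).mul_const p₂).sub_const (q₂ * p₁)
  have hVE := ((hasDerivAt_id' q₁).const_mul (1 - μ)).div_sqrt
    ((hasDerivAt_pow 2 q₁).add_const (q₂ ^ 2)) hE
  have hVM := ((hasDerivAt_id' q₁).const_sub 1 |>.const_mul μ).div_sqrt
    (((hasDerivAt_id' q₁).sub_const 1).fun_pow 2 |>.add_const (q₂ ^ 2)) hM
  refine ((hL.fun_pow 2).neg.add (hL.mul_const p₂) |>.sub hVE |>.sub hVM).congr_deriv ?_
  field_simp
  ring

theorem hasDerivAt_eulerIntegral_q₂ (hE : 0 < q₁ ^ 2 + q₂ ^ 2)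
    (hM : 0 < (q₁ - 1) ^ 2 + q₂ ^ 2) :
    HasDerivAt (fun x => eulerIntegral μ q₁ x p₁ p₂)
      (2 * (q₁ * p₂ - q₂ * p₁) * p₁ - p₁ * p₂ + (1 - μ) * q₁ * q₂ / √(q₁ ^ 2 + q₂ ^ 2) ^ 3
        + μ * (1 - q₁) * q₂ / √((q₁ - 1) ^ 2 + q₂ ^ 2) ^ 3) q₂ := by
  have hL : HasDerivAt (fun x => q₁ * p₂ - x * p₁) (-p₁) q₂ := by
    simpa using ((hasDerivAt_id' q₂).mul_const p₁).const_sub (q₁ * p₂)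
  have hVE := (hasDerivAt_const q₂ ((1 - μ) * q₁)).div_sqrt
    ((hasDerivAt_pow 2 q₂).const_add (q₁ ^ 2)) hE
  have hVM := (hasDerivAt_const q₂ (μ * (1 - q₁))).div_sqrt
    ((hasDerivAt_pow 2 q₂).const_add ((q₁ - 1) ^ 2)) hM
  refine ((hL.fun_pow 2).neg.add (hL.mul_const p₂) |>.sub hVE |>.sub hVM).congr_deriv ?_
  field_simp
  ring

theorem hasDerivAt_eulerIntegral_p₁ :
    HasDerivAt (fun x => eulerIntegral μ q₁ q₂ x p₂)
      (2 * (q₁ * p₂ - q₂ * p₁) * q₂ - q₂ * p₂) p₁ := by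
  have hL : HasDerivAt (fun x => q₁ * p₂ - q₂ * x) (-q₂) p₁ := by
    simpa using ((hasDerivAt_id' p₁).const_mul q₂).const_sub (q₁ * p₂)
  refine ((hL.fun_pow 2).neg.add (hL.mul_const p₂) |>.sub_const _ |>.sub_const _).congr_deriv ?_
  ring

theorem hasDerivAt_eulerIntegral_p₂ :
    HasDerivAt (fun x => eulerIntegral μ q₁ q₂ p₁ x)
      (-2 * (q₁ * p₂ - q₂ * p₁) * q₁ + q₁ * p₂ + (q₁ * p₂ - q₂ * p₁)) p₂ := by
  have hL : HasDerivAt (fun x => q₁ * x - q₂ * p₁) q₁ p₂ := by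
    simpa using ((hasDerivAt_id' p₂).const_mul q₁).sub_const (q₂ * p₁)
  refine ((hL.fun_pow 2).neg.add (hL.mul (hasDerivAt_id' p₂)) |>.sub_const _ |>.sub_const _)
    |>.congr_deriv ?_
  ring

end

theorem euler_integral_poisson_commutes_general (μ : ℝ)
    (q₁ q₂ p₁ p₂ : ℝ) (hE : (q₁, q₂) ≠ (0, 0)) (hM : (q₁, q₂) ≠ (1, 0)) :
    poissonBracket (eulerHamiltonian μ) (eulerIntegral μ) q₁ q₂ p₁ p₂ = 0 := by
  have hrE : 0 < q₁ ^ 2 + q₂ ^ 2 := by simpa using sub_sq_add_sq_pos_of_ne hE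
  have hrM : 0 < (q₁ - 1) ^ 2 + q₂ ^ 2 := sub_sq_add_sq_pos_of_ne hM
  rw [poissonBracket_eq_of_hasDerivAt
    (hasDerivAt_eulerHamiltonian_q₁ μ hrE hrM) (hasDerivAt_eulerHamiltonian_q₂ μ hrE hrM)
    (hasDerivAt_eulerHamiltonian_p₁ μ) (hasDerivAt_eulerHamiltonian_p₂ μ)
    (hasDerivAt_eulerIntegral_q₁ μ hrE hrM) (hasDerivAt_eulerIntegral_q₂ μ hrE hrM)
    (hasDerivAt_eulerIntegral_p₁ μ) (hasDerivAt_eulerIntegral_p₂ μ)]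
  ring

theorem euler_integral_poisson_commutes (μ : ℝ) (hμ : μ ∈ Set.Ioo (0 : ℝ) 1)
    (q₁ q₂ p₁ p₂ : ℝ) (hE : (q₁, q₂) ≠ (0, 0)) (hM : (q₁, q₂) ≠ (1, 0)) :
    poissonBracket (eulerHamiltonian μ) (eulerIntegral μ) q₁ q₂ p₁ p₂ = 0 :=
  euler_integral_poisson_commutes_general μ q₁ q₂ p₁ p₂ hE hM
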